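/- arXiv:2511.18420 — 3 statements merged into one kernel-verified Lean document; each statement's English description precedes it below -/
import Mathlib

section
/- Let f : F_2^k → S be a function with 2 ≤ |Im(f)| ≤ k, and let t_d ≤ t_f be natural numbers. Then the optimal redundancy satisfies r_f(k, t_d, t_f) ≥ 2t_f + t_d. -/
/-- An `(f, t_d, t_f)`-FCC over `F_2` (stated for general `d_d = 2t_d+1`, `d_f = 2t_f+1`). -/
def IsFCC {F S : Type*} [Fintype F] [DecidableEq F] {k r : ℕ}
    (f : (Fin k → F) → S) (dd df : ℕ)
    (c : (Fin k → F) → (Fin (k + r) → F)) : Prop :=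
  (∀ u i, c u (Fin.castAdd r i) = u i) ∧
  (∀ u v, u ≠ v → dd ≤ hammingDist (c u) (c v)) ∧
  (∀ u v, f u ≠ f v → df ≤ hammingDist (c u) (c v))

/-- The optimal redundancy `r_f(k, t_d, t_f)`. -/
noncomputable def optRedundancy {F S : Type*} [Fintype F] [DecidableEq F] {k : ℕ}
    (f : (Fin k → F) → S) (dd df : ℕ) : ℕ :=
  sInf {r : ℕ | ∃ c : (Fin k → F) → (Fin (k + r) → F), IsFCC f dd df c}

/-!
Take messages `u`, `v` at Hamming distance at most one with `f u ≠ f v` (they exist because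
`f` is not constant and the Hamming graph is connected), and, using `k ≥ 2`, a third message
`w ∉ {u, v}` adjacent to `v`. As `f w` differs from `f u` or `f v`, two of the three codeword
distances are at least `2 t_f + 1` and the third is at least `2 t_d + 1`. The message parts
contribute at most `1 + 1 + 2` to their sum, and over `F_2` every redundancy coordinate
contributes to at most two of the three distances, so `2 (2 t_f + 1) + (2 t_d + 1) ≤ 4 + 2 r`.
A repetition code shows that the set defining `r_f` is nonempty, so its infimum is not the
junk value `0`.
-/

open Finset Function

section Hamming

variable {ι β : Type*} [Fintype ι] [DecidableEq β]

theorem hammingDist_update_le_one [DecidableEq ι] (x : ι → β) (i : ι) (a : β) :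
    hammingDist x (update x i a) ≤ 1 := by
  refine (card_le_card fun j hj => ?_).trans (card_singleton i).le
  by_contra hji
  simp_all [update_of_ne (mem_singleton.not.mp hji)]

theorem hammingDist_update_lt [DecidableEq ι] {x y : ι → β} {i : ι} (hi : x i ≠ y i) :
    hammingDist (update x i (y i)) y < hammingDist x y := by
  refine card_lt_card
    ((ssubset_iff_of_subset fun j hj => ?_).mpr ⟨i, by simpa using hi, by simp⟩)
  rcases eq_or_ne j i with rfl | hji <;> simp_all

theorem exists_hammingDist_le_one_ne [DecidableEq ι] {γ : Type*} (f : (ι → β) → γ)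
    {u v : ι → β} (h : f u ≠ f v) : ∃ x y, hammingDist x y ≤ 1 ∧ f x ≠ f y := by
  induction hd : hammingDist u v using Nat.strong_induction_on generalizing u with
  | _ n ih =>
    obtain ⟨i, hi⟩ := ne_iff.mp (ne_of_apply_ne f h)
    by_cases hstep : f u = f (update u i (v i))
    · exact ih _ (hd ▸ hammingDist_update_lt hi) (hstep ▸ h) rfl
    · exact ⟨u, _, hammingDist_update_le_one u i (v i), hstep⟩

theorem exists_ne_ne_hammingDist_le_one [DecidableEq ι] [Nontrivial β]
    (hι : 1 < Fintype.card ι) {u v : ι → β} (huv : u ≠ v) :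
    ∃ w, w ≠ u ∧ w ≠ v ∧ hammingDist v w ≤ 1 := by
  obtain ⟨i, hi⟩ := ne_iff.mp huv
  obtain ⟨j, hji⟩ := Fintype.exists_ne_of_one_lt_card hι i
  obtain ⟨a, ha⟩ := exists_ne (v j)
  refine ⟨update v j a, fun h => hi ?_, fun h => ha ?_, hammingDist_update_le_one v j a⟩
  · rw [← h, update_of_ne hji.symm]
  · rw [← congrFun h j, update_self]

theorem hammingDist_comp_equiv {κ : Type*} [Fintype κ] (e : κ ≃ ι) (x y : ι → β) :
    hammingDist (x ∘ e) (y ∘ e) = hammingDist x y := by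
  simp only [hammingDist, card_filter]
  exact e.sum_comp fun i => if x i ≠ y i then 1 else 0

theorem hammingDist_comp_snd (α : Type*) [Fintype α] (x y : ι → β) :
    hammingDist (x ∘ Prod.snd : α × ι → β) (y ∘ Prod.snd) = Fintype.card α * hammingDist x y := by
  rw [hammingDist, ← univ_product_univ, ← card_univ, hammingDist, ← card_product]
  congr 1
  ext
  simp

theorem Fin.hammingDist_eq_castAdd_add_natAdd {k r : ℕ} (x y : Fin (k + r) → β) :
    hammingDist x y = hammingDist (x ∘ Fin.castAdd r) (y ∘ Fin.castAdd r) +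
      hammingDist (x ∘ Fin.natAdd k) (y ∘ Fin.natAdd k) := by
  simp only [hammingDist, card_filter]
  exact Fin.sum_univ_add _

theorem Fin.hammingDist_append {k r : ℕ} (x y : Fin k → β) (x' y' : Fin r → β) :
    hammingDist (Fin.append x x') (Fin.append y y') = hammingDist x y + hammingDist x' y' := by
  simp [Fin.hammingDist_eq_castAdd_add_natAdd, comp_def]

end Hamming

theorem ZMod.hammingDist_add_add_le_two_mul {ι : Type*} [Fintype ι] (a b c : ι → ZMod 2) :
    hammingDist a b + hammingDist b c + hammingDist a c ≤ 2 * Fintype.card ι := by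
  have hcoord : ∀ x y z : ZMod 2,
      (if x ≠ y then 1 else 0) + (if y ≠ z then 1 else 0) + (if x ≠ z then 1 else 0) ≤ 2 := by
    decide
  simp only [hammingDist, card_filter, ← sum_add_distrib]
  calc _ ≤ ∑ _i : ι, 2 := sum_le_sum fun i _ => hcoord (a i) (b i) (c i)
    _ = 2 * Fintype.card ι := by simp [mul_comm]

theorem exists_systematic_le_hammingDist {β : Type*} [DecidableEq β] {k : ℕ} (m : ℕ) :
    ∃ c : (Fin k → β) → (Fin (k + m * k) → β), (∀ u i, c u (Fin.castAdd (m * k) i) = u i) ∧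
      ∀ u v, u ≠ v → m + 1 ≤ hammingDist (c u) (c v) := by
  refine ⟨fun u => Fin.append u ((u ∘ Prod.snd) ∘ finProdFinEquiv.symm), fun u i => ?_,
    fun u v huv => ?_⟩
  · simp
  · rw [Fin.hammingDist_append, hammingDist_comp_equiv,
      hammingDist_comp_snd, Fintype.card_fin]
    have := hammingDist_pos.mpr huv
    nlinarith

theorem exists_isFCC {F S : Type*} [Fintype F] [DecidableEq F] {k : ℕ}
    (f : (Fin k → F) → S) (dd df : ℕ) :
    ∃ r, ∃ c : (Fin k → F) → (Fin (k + r) → F), IsFCC f dd df c := by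
  obtain ⟨c, hsys, hdist⟩ := exists_systematic_le_hammingDist (β := F) (k := k) (max dd df)
  refine ⟨_, c, hsys, fun u v huv => ?_, fun u v hf => ?_⟩
  · have := hdist u v huv
    omega
  · have := hdist u v (ne_of_apply_ne f hf)
    omega

theorem hammingDist_add_add_le_of_systematic {k r : ℕ}
    {c : (Fin k → ZMod 2) → (Fin (k + r) → ZMod 2)} (hc : ∀ u i, c u (Fin.castAdd r i) = u i)
    (u v w : Fin k → ZMod 2) :
    hammingDist (c u) (c v) + hammingDist (c v) (c w) + hammingDist (c u) (c w) ≤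
      hammingDist u v + hammingDist v w + hammingDist u w + 2 * r := by
  have hhead : ∀ u, c u ∘ Fin.castAdd r = u := fun u => funext (hc u)
  have htail := ZMod.hammingDist_add_add_le_two_mul (c u ∘ Fin.natAdd k) (c v ∘ Fin.natAdd k)
    (c w ∘ Fin.natAdd k)
  simp only [Fin.hammingDist_eq_castAdd_add_natAdd (c _), hhead]
  rw [Fintype.card_fin] at htail
  omega

theorem IsFCC.two_mul_add_le {S : Type*} {k r dd df : ℕ} {f : (Fin k → ZMod 2) → S}
    {c : (Fin k → ZMod 2) → (Fin (k + r) → ZMod 2)} (hc : IsFCC f dd df c) (hk : 2 ≤ k)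
    {u₀ v₀ : Fin k → ZMod 2} (hf₀ : f u₀ ≠ f v₀) : 2 * df + dd ≤ 2 * r + 4 := by
  obtain ⟨hsys, hdd, hdf⟩ := hc
  obtain ⟨u, v, huv, hf⟩ := exists_hammingDist_le_one_ne f hf₀
  obtain ⟨w, hwu, hwv, hvw⟩ :=
    exists_ne_ne_hammingDist_le_one (by rw [Fintype.card_fin]; omega) (ne_of_apply_ne f hf)
  have huw : hammingDist u w ≤ 2 := (hammingDist_triangle u v w).trans (by omega)
  -- `f w` differs from `f u` or from `f v`, so two of the three pairs are `df`-separated.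
  have hsep : 2 * df + dd ≤
      hammingDist (c u) (c v) + hammingDist (c v) (c w) + hammingDist (c u) (c w) := by
    have h₁ := hdf u v hf
    by_cases hfw : f w = f u
    · have := hdf v w (hfw ▸ hf.symm)
      have := hdd u w hwu.symm
      omega
    · have := hdf u w (Ne.symm hfw)
      have := hdd v w hwv.symm
      omega
  have := hammingDist_add_add_le_of_systematic hsys u v w
  omega

theorem optRedundancy_ge_two_tf_add_td_general
    {S : Type*} {k : ℕ} (f : (Fin k → ZMod 2) → S) (td tf : ℕ)
    (hIm2 : 2 ≤ Nat.card (Set.range f)) (hImk : Nat.card (Set.range f) ≤ k) :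
    2 * tf + td ≤ optRedundancy f (2 * td + 1) (2 * tf + 1) := by
  have hk : 2 ≤ k := hIm2.trans hImk
  have : Nontrivial (Set.range f) := Finite.one_lt_card_iff_nontrivial.mp hIm2
  obtain ⟨⟨_, u, rfl⟩, ⟨_, v, rfl⟩, huv⟩ := exists_pair_ne (Set.range f)
  have hfuv : f u ≠ f v := fun h => huv (Subtype.ext h)
  obtain ⟨r, c, hc⟩ := exists_isFCC f (2 * td + 1) (2 * tf + 1)
  refine le_csInf ⟨r, c, hc⟩ fun r ⟨c, hc⟩ => ?_
  have := hc.two_mul_add_le hk hfuv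
  omega

/-- For `f : F_2^k → S` with `2 ≤ |Im(f)| ≤ k` and `t_d ≤ t_f`,
`r_f(k, t_d, t_f) ≥ 2 t_f + t_d`. -/
theorem optRedundancy_ge_two_tf_add_td
    {S : Type*} {k : ℕ} (f : (Fin k → ZMod 2) → S) (td tf : ℕ) (htdtf : td ≤ tf)
    (hIm2 : 2 ≤ Nat.card (Set.range f)) (hImk : Nat.card (Set.range f) ≤ k) :
    2 * tf + td ≤ optRedundancy f (2 * td + 1) (2 * tf + 1) :=
  optRedundancy_ge_two_tf_add_td_general f td tf hIm2 hImk
end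

section
/- Let C ⊆ F_q^n be an MDS code with parameters (n, M, d)_q, i.e., |C| = M = q^{n−d+1} and minimum distance d, where d ≤ n. Then for any distinct codewords u, v ∈ C there exists a codeword u' ∈ C such that d(u, u') = d and d(u', v) ≤ d(u, v) − 1. -/
/-- The minimum distance of a code `C ⊆ F^n`. -/
noncomputable def minDist {F : Type*} [Fintype F] [DecidableEq F] {n : ℕ}
    (C : Set (Fin n → F)) : ℕ :=
  sInf {d : ℕ | ∃ x ∈ C, ∃ y ∈ C, x ≠ y ∧ hammingDist x y = d}

/-!
Any `n - d + 1` coordinates `I` form an information set of an MDS code: two codewords agreeing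
on `I` differ in at most `d - 1` places, so restriction to `I` is injective, hence bijective by
counting. Given `u ≠ v`, pick a coordinate `j` where they differ and take `I` to contain `j` and
every coordinate where `u` and `v` agree. The codeword `u'` that matches `v` at `j` and `u` on the
rest of `I` differs from `u` only on `Iᶜ ∪ {j}`, a set of size `d`, and from `v` only where `u` and
`v` already differ, except at `j`.
-/

open Finset

theorem hammingDist_le_card_of_eq_of_notMem {ι β : Type*} [Fintype ι] [DecidableEq β]
    {x y : ι → β} {s : Finset ι} (h : ∀ i ∉ s, x i = y i) : hammingDist x y ≤ #s :=
  card_le_card fun i hi => by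
    by_contra his
    exact (mem_filter.mp hi).2 (h i his)

section Code

variable {F : Type*} [Fintype F] [DecidableEq F] {n : ℕ} {C : Set (Fin n → F)}

theorem minDist_le_hammingDist {x y : Fin n → F} (hx : x ∈ C) (hy : y ∈ C) (hxy : x ≠ y) :
    minDist C ≤ hammingDist x y :=
  Nat.sInf_le ⟨x, hx, y, hy, hxy, rfl⟩

theorem injective_restrict_of_card_compl_lt {I : Finset (Fin n)} (hI : #Iᶜ < minDist C) :
    Function.Injective fun x : C => I.restrict (x : Fin n → F) := by
  intro x y hxy
  by_contra hne
  have hagree : ∀ i ∉ Iᶜ, x.1 i = y.1 i := fun i hi =>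
    congrFun hxy ⟨i, by simpa using hi⟩
  have := minDist_le_hammingDist x.2 y.2 (Subtype.coe_ne_coe.mpr hne)
  have := hammingDist_le_card_of_eq_of_notMem hagree
  omega

theorem exists_mem_eqOn_of_card_eq_pow {d : ℕ} (hmin : minDist C = d)
    (hMDS : Nat.card C = Fintype.card F ^ (n - d + 1))
    {I : Finset (Fin n)} (hI : #I = n - d + 1) (g : Fin n → F) :
    ∃ x ∈ C, ∀ i ∈ I, x i = g i := by
  have hIc : #Iᶜ < minDist C := by
    have := I.card_le_univ
    rw [Fintype.card_fin] at this
    rw [card_compl, Fintype.card_fin, hmin]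
    omega
  have hC : Finite C := Set.toFinite C
  have hcard : Nat.card (I → F) ≤ Nat.card C := by
    rw [Nat.card_fun, hMDS, Nat.card_eq_fintype_card, Nat.card_eq_fintype_card,
      Fintype.card_coe, hI]
  obtain ⟨⟨x, hx⟩, hxg⟩ :=
    ((injective_restrict_of_card_compl_lt hIc).bijective_of_nat_card_le hcard).2 (I.restrict g)
  exact ⟨x, hx, fun i hi => congrFun hxg ⟨i, hi⟩⟩

end Code

theorem MDS_step_lemma_general
    {F : Type*} [Fintype F] [DecidableEq F]
    {n d : ℕ} (hd : 1 ≤ d) (hdn : d ≤ n)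
    (C : Set (Fin n → F)) (hmin : minDist C = d)
    (hMDS : Nat.card C = Fintype.card F ^ (n - d + 1))
    (u v : Fin n → F) (hu : u ∈ C) (hv : v ∈ C) (huv : u ≠ v) :
    ∃ u' ∈ C, hammingDist u u' = d ∧ hammingDist u' v ≤ hammingDist u v - 1 := by
  set D : Finset (Fin n) := {i | u i ≠ v i}
  have hdD : d ≤ #D := hmin ▸ minDist_le_hammingDist hu hv huv
  obtain ⟨j, hj⟩ : D.Nonempty := card_pos.mp (by omega)
  obtain ⟨I, hjDI, hI⟩ : ∃ I, insert j Dᶜ ⊆ I ∧ #I = n - d + 1 := by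
    refine exists_superset_card_eq ((card_insert_le _ _).trans ?_) (by simp; omega)
    rw [card_compl, Fintype.card_fin]
    omega
  obtain ⟨u', hu', hu'I⟩ := 
    exists_mem_eqOn_of_card_eq_pow hmin hMDS hI (Function.update u j (v j))
  have hu'j : u' j = v j := by simpa using hu'I j (hjDI (mem_insert_self _ _))
  have hu'u : ∀ i ∉ insert j Iᶜ, u i = u' i := fun i hi => by
    simp only [mem_insert, mem_compl, not_or, not_not] at hi
    simp [hu'I i hi.2, hi.1]
  have hu'v : ∀ i ∉ D.erase j, u' i = v i := fun i hi => by
    rcases eq_or_ne i j with rfl | hij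
    · exact hu'j
    · have hiD : i ∈ Dᶜ := by simpa [hij] using hi
      rw [← hu'u i (by simp [hij, hjDI (mem_insert_of_mem hiD)])]
      simpa [D] using hiD
  have huu' : u ≠ u' := fun h => (mem_filter.mp hj).2 (h ▸ hu'j)
  refine ⟨u', hu', le_antisymm ?_ (hmin ▸ minDist_le_hammingDist hu hu' huu'), ?_⟩
  · calc hammingDist u u' ≤ #(insert j Iᶜ) := hammingDist_le_card_of_eq_of_notMem hu'u
      _ ≤ #Iᶜ + 1 := card_insert_le _ _
      _ = d := by rw [card_compl, Fintype.card_fin, hI]; omega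
  · calc hammingDist u' v ≤ #(D.erase j) := hammingDist_le_card_of_eq_of_notMem hu'v
      _ = hammingDist u v - 1 := card_erase_of_mem hj

/-- In an `(n, M, d)_q` MDS code (`M = q^{n−d+1}`, minimum distance `d ≤ n`),
for any distinct codewords `u, v` there is a codeword `u'` with `d(u, u') = d` and
`d(u', v) ≤ d(u, v) − 1`. -/
theorem MDS_step_lemma
    {F : Type*} [Field F] [Fintype F] [DecidableEq F]
    {n d : ℕ} (hd : 1 ≤ d) (hdn : d ≤ n)
    (C : Set (Fin n → F)) (hmin : minDist C = d)
    (hMDS : Nat.card C = Fintype.card F ^ (n - d + 1))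
    (u v : Fin n → F) (hu : u ∈ C) (hv : v ∈ C) (huv : u ≠ v) :
    ∃ u' ∈ C, hammingDist u u' = d ∧ hammingDist u' v ≤ hammingDist u v - 1 :=
  MDS_step_lemma_general hd hdn C hmin hMDS u v hu hv huv
end

section
/- Let q be a prime power, f : F_q^k → F_q^ℓ a linear map, and d_d ≤ d_f positive integers. Let C : F_q^k → F_q^n be an injective linear map in systematic form (the first k coordinates of C(u) equal u) whose image has Hamming weight at least d_d on every nonzero vector, and let D : F_q^ℓ → F_q^{r'} be an injective linear map whose image has Hamming weight at least d_f − d_d on every nonzero vector. Then C_cat = {(C(u), D(f(u))) : u ∈ F_q^k} is a k-dimensional linear subspace of F_q^{n+r'} satisfying: d(x, y) ≥ d_d for all distinct x, y ∈ C_cat, and d((C(u_1), D(f(u_1))), (C(u_2), D(f(u_2)))) ≥ d_f whenever f(u_1) ≠ f(u_2). In particular, u ↦ (C(u), D(f(u))) is a linear (f : d_d, d_f)-FCC of dimension k with total redundancy (n − k) + r'. -/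
/-!
The Hamming distance of two concatenations is the sum of the distances of the blocks. For a
linear code the distance of two codewords is the weight of the codeword of the difference, so the
`C`-block alone contributes at least `d_d`, and when `f u ≠ f v` the `D`-block contributes the
remaining `d_f - d_d`.
-/

theorem Fin.hammingDist_append_s14 {β : Type*} [DecidableEq β] {m n : ℕ}
    (a c : Fin m → β) (b d : Fin n → β) :
    hammingDist (Fin.append a b) (Fin.append c d) = hammingDist a c + hammingDist b d := by
  simp only [hammingDist, Finset.card_filter, Fin.sum_univ_add, Fin.append_left, Fin.append_right]

theorem le_hammingDist_map {𝓕 G ι β : Type*} [AddGroup G] [Fintype ι] [AddGroup β]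
    [DecidableEq β] [FunLike 𝓕 G (ι → β)] [AddMonoidHomClass 𝓕 G (ι → β)] (C : 𝓕) {d : ℕ}
    (hC : ∀ u, u ≠ 0 → d ≤ hammingNorm (C u)) {u v : G} (huv : u ≠ v) :
    d ≤ hammingDist (C u) (C v) := by
  rw [hammingDist_eq_hammingNorm, ← map_neg, ← map_add]
  exact hC _ (neg_add_eq_zero.not.mpr huv)

namespace LinearMap

variable {R M N : Type*} [Semiring R] [AddCommMonoid M] [Module R M] [AddCommMonoid N]
  [Module R N] {m n : ℕ}

def finAppend (A : M →ₗ[R] Fin m → N) (B : M →ₗ[R] Fin n → N) : M →ₗ[R] Fin (m + n) → N where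
  toFun u := Fin.append (A u) (B u)
  map_add' u v := by
    funext i
    refine Fin.addCases (fun i => ?_) (fun i => ?_) i <;> simp
  map_smul' c u := by
    funext i
    refine Fin.addCases (fun i => ?_) (fun i => ?_) i <;> simp

@[simp]
theorem finAppend_apply (A : M →ₗ[R] Fin m → N) (B : M →ₗ[R] Fin n → N) (u : M) :
    A.finAppend B u = Fin.append (A u) (B u) :=
  rfl

theorem finAppend_injective {A : M →ₗ[R] Fin m → N} (hA : Function.Injective A)
    (B : M →ₗ[R] Fin n → N) : Function.Injective (A.finAppend B) := fun u v h =>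
  hA <| funext fun i => by simpa using congrFun h (Fin.castAdd n i)

end LinearMap

theorem linear_concatenation_is_FCC_general
    {F : Type*} [Field F] [DecidableEq F]
    {k l n r' : ℕ} (dd df : ℕ)
    (f : (Fin k → F) →ₗ[F] (Fin l → F))
    (C : (Fin k → F) →ₗ[F] (Fin n → F)) (hCinj : Function.Injective C)
    (hCwt : ∀ u : Fin k → F, u ≠ 0 → dd ≤ hammingNorm (C u))
    (D : (Fin l → F) →ₗ[F] (Fin r' → F))
    (hDwt : ∀ w : Fin l → F, w ≠ 0 → df - dd ≤ hammingNorm (D w)) :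
    (∃ W : Submodule F (Fin (n + r') → F),
        (W : Set (Fin (n + r') → F)) =
          Set.range (fun u : Fin k → F => Fin.append (C u) (D (f u))) ∧
        Module.finrank F W = k) ∧
    (∀ u v : Fin k → F, u ≠ v →
        dd ≤ hammingDist (Fin.append (C u) (D (f u))) (Fin.append (C v) (D (f v)))) ∧
    (∀ u v : Fin k → F, f u ≠ f v →
        df ≤ hammingDist (Fin.append (C u) (D (f u))) (Fin.append (C v) (D (f v)))) := by
  refine ⟨⟨LinearMap.range (C.finAppend (D ∘ₗ f)), LinearMap.coe_range _, ?_⟩, ?_, ?_⟩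
  · rw [LinearMap.finrank_range_of_inj (LinearMap.finAppend_injective hCinj _),
      Module.finrank_fin_fun]
  · intro u v huv
    rw [Fin.hammingDist_append_s14]
    exact (le_hammingDist_map C hCwt huv).trans (Nat.le_add_right _ _)
  · intro u v hf
    have hC := le_hammingDist_map C hCwt fun huv => hf (congrArg f huv)
    have hD := le_hammingDist_map D hDwt hf
    rw [Fin.hammingDist_append_s14]
    omega

/-- Concatenation of a systematic `[n, k]` linear code of minimum weight
`d_d` with a `[r', ℓ]` linear code of minimum weight `d_f − d_d` applied to a linear function
`f` yields a `k`-dimensional linear `(f : d_d, d_f)`-FCC in `F_q^{n+r'}`. -/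
theorem linear_concatenation_is_FCC
    {F : Type*} [Field F] [Fintype F] [DecidableEq F]
    {k l n r' : ℕ} (hkn : k ≤ n) (dd df : ℕ) (hdd : 1 ≤ dd) (hddf : dd ≤ df)
    (f : (Fin k → F) →ₗ[F] (Fin l → F))
    (C : (Fin k → F) →ₗ[F] (Fin n → F)) (hCinj : Function.Injective C)
    (hCsys : ∀ (u : Fin k → F) (i : Fin k), C u (Fin.castLE hkn i) = u i)
    (hCwt : ∀ u : Fin k → F, u ≠ 0 → dd ≤ hammingNorm (C u))
    (D : (Fin l → F) →ₗ[F] (Fin r' → F)) (hDinj : Function.Injective D)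
    (hDwt : ∀ w : Fin l → F, w ≠ 0 → df - dd ≤ hammingNorm (D w)) :
    (∃ W : Submodule F (Fin (n + r') → F),
        (W : Set (Fin (n + r') → F)) =
          Set.range (fun u : Fin k → F => Fin.append (C u) (D (f u))) ∧
        Module.finrank F W = k) ∧
    (∀ u v : Fin k → F, u ≠ v →
        dd ≤ hammingDist (Fin.append (C u) (D (f u))) (Fin.append (C v) (D (f v)))) ∧
    (∀ u v : Fin k → F, f u ≠ f v →
        df ≤ hammingDist (Fin.append (C u) (D (f u))) (Fin.append (C v) (D (f v)))) :=
  linear_concatenation_is_FCC_general dd df f C hCinj hCwt D hDwt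
end
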